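/- In the double extension g = ℝa ⊕ B ⊕ ℝd with product ∘ defined by a∘a = a∘x = x∘a = 0, x∘y = ⟨v(x),y⟩'·a + x∘_B y, a∘d = γ'a, d∘d = βa + a₀ + γd, d∘x = ωa + t(x) (for x,y ∈ B with arbitrary scalars γ', γ, β, ω and linear map t : B → B), and scalar product ⟨·,·⟩ extending ⟨·,·⟩' with ⟨a,d⟩ = 1, ⟨a,a⟩ = ⟨d,d⟩ = 0, and ℝa ⊕ ℝd orthogonal to B, the product ∘ satisfies the Frobenius identity ⟨u∘w, z⟩ = ⟨u, w∘z⟩ on g if and only if t = v, γ' = γ, and ω(x) = ⟨a₀, x⟩' for all x ∈ B. -/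

import Mathlib

/-!
Testing the Frobenius identity on the triples `(x, y, d)`, `(a, d, d)` and `(x, d, d)` with
`x, y ∈ B` gives `⟨v x, y⟩' = ⟨x, t y⟩'`, `γ' = γ` and `ω x = ⟨x, a₀⟩'`; since `v` is self-adjoint
for the nondegenerate form `⟨·,·⟩'`, the first says that `t` is the adjoint of `v`, i.e. `t = v`.
Conversely, once these hold, the Frobenius identity on `g` expands into a linear combination of
the Frobenius identity on `B`, the self-adjointness of `v` and the symmetry of `⟨·,·⟩'`.
-/

namespace DoubleExtension

variable {B : Type*} [AddCommGroup B] [Module ℝ B]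
  (circB : B →ₗ[ℝ] B →ₗ[ℝ] B) (Bf : LinearMap.BilinForm ℝ B) (v : B →ₗ[ℝ] B)
  (a₀ : B) (γ' γ β : ℝ) (ω : B →ₗ[ℝ] ℝ) (t : B →ₗ[ℝ] B)

-- The triple `(s, x, r)` stands for `s • a + x + r • d`.
def mul (p q : ℝ × B × ℝ) : ℝ × B × ℝ :=
  (Bf (v p.2.1) q.2.1 + γ' * (p.1 * q.2.2 + q.1 * p.2.2)
      + β * (p.2.2 * q.2.2) + p.2.2 * ω q.2.1 + q.2.2 * ω p.2.1,
   circB p.2.1 q.2.1 + (p.2.2 * q.2.2) • a₀ + p.2.2 • t q.2.1 + q.2.2 • t p.2.1,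
   γ * (p.2.2 * q.2.2))

def form (p q : ℝ × B × ℝ) : ℝ :=
  p.1 * q.2.2 + q.1 * p.2.2 + Bf p.2.1 q.2.1

section Necessity

variable {circB Bf v a₀ γ' γ β ω t}
  (h : ∀ p q r, form Bf (mul circB Bf v a₀ γ' γ β ω t p q) r
    = form Bf p (mul circB Bf v a₀ γ' γ β ω t q r))
include h

theorem apply_v_eq_apply_t_of_frobenius (x y : B) : Bf (v x) y = Bf x (t y) := by
  simpa [mul, form] using h (0, x, 0) (0, y, 0) (0, 0, 1)

theorem gamma'_eq_gamma_of_frobenius : γ' = γ := by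
  simpa [mul, form] using h (1, 0, 0) (0, 0, 1) (0, 0, 1)

theorem omega_eq_of_frobenius (x : B) : ω x = Bf x a₀ := by
  simpa [mul, form] using h (0, x, 0) (0, 0, 1) (0, 0, 1)

theorem t_eq_v_of_frobenius (hnd : Bf.Nondegenerate) (hvsa : ∀ x y, Bf (v x) y = Bf x (v y)) :
    t = v :=
  Bf.flip.isAdjointPair_unique_of_nondegenerate hnd.flip v t v
    (fun x y => (apply_v_eq_apply_t_of_frobenius h y x).symm) fun x y => (hvsa y x).symm

end Necessity

variable {circB Bf v a₀ γ β ω} in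
theorem frobenius_of_t_eq_v (hsymm : ∀ x y, Bf x y = Bf y x)
    (hfrob : ∀ x y z, Bf (circB x y) z = Bf x (circB y z))
    (hvsa : ∀ x y, Bf (v x) y = Bf x (v y)) (hω : ∀ x, ω x = Bf a₀ x) (p q r : ℝ × B × ℝ) :
    form Bf (mul circB Bf v a₀ γ γ β ω v p q) r = form Bf p (mul circB Bf v a₀ γ γ β ω v q r) := by
  simp only [mul, form, map_add, map_smul, LinearMap.add_apply, LinearMap.smul_apply,
    smul_eq_mul, hω]
  linear_combination hfrob p.2.1 q.2.1 r.2.1 + r.2.2 * hvsa p.2.1 q.2.1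
    + q.2.2 * hvsa p.2.1 r.2.1 + (q.2.2 * r.2.2) * hsymm a₀ p.2.1

end DoubleExtension

theorem stmt6_general {B : Type*} [AddCommGroup B] [Module ℝ B]
    (circB : B →ₗ[ℝ] B →ₗ[ℝ] B)
    (Bf : LinearMap.BilinForm ℝ B)
    (hsymm : ∀ x y : B, Bf x y = Bf y x)
    (hnd : Bf.Nondegenerate)
    (hfrob : ∀ x y z : B, Bf (circB x y) z = Bf x (circB y z))
    (v : B →ₗ[ℝ] B)
    (hvsa : ∀ x y : B, Bf (v x) y = Bf x (v y))
    (a₀ : B) (gamma' gamma beta : ℝ) (ω : B →ₗ[ℝ] ℝ) (t : B →ₗ[ℝ] B)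
    (mul : (ℝ × B × ℝ) → (ℝ × B × ℝ) → (ℝ × B × ℝ))
    (hmul : ∀ p q : ℝ × B × ℝ, mul p q =
      (Bf (v p.2.1) q.2.1 + gamma' * (p.1 * q.2.2 + q.1 * p.2.2)
          + beta * (p.2.2 * q.2.2) + p.2.2 * ω q.2.1 + q.2.2 * ω p.2.1,
       circB p.2.1 q.2.1 + (p.2.2 * q.2.2) • a₀ + p.2.2 • t q.2.1 + q.2.2 • t p.2.1,
       gamma * (p.2.2 * q.2.2)))
    (Bg : (ℝ × B × ℝ) → (ℝ × B × ℝ) → ℝ)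
    (hBg : ∀ p q : ℝ × B × ℝ, Bg p q = p.1 * q.2.2 + q.1 * p.2.2 + Bf p.2.1 q.2.1) :
    (∀ p q r : ℝ × B × ℝ, Bg (mul p q) r = Bg p (mul q r)) ↔
      (t = v ∧ gamma' = gamma ∧ ∀ x : B, ω x = Bf a₀ x) := by
  obtain rfl : mul = DoubleExtension.mul circB Bf v a₀ gamma' gamma beta ω t := funext₂ hmul
  obtain rfl : Bg = DoubleExtension.form Bf := funext₂ hBg
  constructor
  · intro h
    exact ⟨DoubleExtension.t_eq_v_of_frobenius h hnd hvsa,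
      DoubleExtension.gamma'_eq_gamma_of_frobenius h,
      fun x => (DoubleExtension.omega_eq_of_frobenius h x).trans (hsymm x a₀)⟩
  · rintro ⟨rfl, rfl, hω⟩
    exact DoubleExtension.frobenius_of_t_eq_v hsymm hfrob hvsa hω

/-- The candidate double extension product satisfies the Frobenius identity
with respect to the extended scalar product iff t = v, γ' = γ and ω = ⟨a₀,·⟩'. -/
theorem stmt6 {B : Type*} [AddCommGroup B] [Module ℝ B] [FiniteDimensional ℝ B]
    (circB : B →ₗ[ℝ] B →ₗ[ℝ] B)
    (hcomm : ∀ x y : B, circB x y = circB y x)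
    (hassoc : ∀ x y z : B, circB (circB x y) z = circB x (circB y z))
    (Bf : LinearMap.BilinForm ℝ B)
    (hsymm : ∀ x y : B, Bf x y = Bf y x)
    (hnd : Bf.Nondegenerate)
    (hfrob : ∀ x y z : B, Bf (circB x y) z = Bf x (circB y z))
    (v : B →ₗ[ℝ] B)
    (hvsa : ∀ x y : B, Bf (v x) y = Bf x (v y))
    (hvc : ∀ x y : B, v (circB x y) = circB (v x) y)
    (a₀ : B) (gamma' gamma beta : ℝ) (ω : B →ₗ[ℝ] ℝ) (t : B →ₗ[ℝ] B)
    (mul : (ℝ × B × ℝ) → (ℝ × B × ℝ) → (ℝ × B × ℝ))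
    (hmul : ∀ p q : ℝ × B × ℝ, mul p q =
      (Bf (v p.2.1) q.2.1 + gamma' * (p.1 * q.2.2 + q.1 * p.2.2)
          + beta * (p.2.2 * q.2.2) + p.2.2 * ω q.2.1 + q.2.2 * ω p.2.1,
       circB p.2.1 q.2.1 + (p.2.2 * q.2.2) • a₀ + p.2.2 • t q.2.1 + q.2.2 • t p.2.1,
       gamma * (p.2.2 * q.2.2)))
    (Bg : (ℝ × B × ℝ) → (ℝ × B × ℝ) → ℝ)
    (hBg : ∀ p q : ℝ × B × ℝ, Bg p q = p.1 * q.2.2 + q.1 * p.2.2 + Bf p.2.1 q.2.1) :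
    (∀ p q r : ℝ × B × ℝ, Bg (mul p q) r = Bg p (mul q r)) ↔
      (t = v ∧ gamma' = gamma ∧ ∀ x : B, ω x = Bf a₀ x) :=
  stmt6_general circB Bf hsymm hnd hfrob v hvsa a₀ gamma' gamma beta ω t mul hmul Bg hBg
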